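/- arXiv:2402.06008 — 2 statements merged into one kernel-verified Lean document; each statement's English description precedes it below -/
import Mathlib

section
/- Let k ∈ {4,5} and let σ = (x,y) be a proper (Z_k × Z_2)-coloring of a snark G. Then the set Y_0 = {e ∈ E(G) : y(e) = 0} is a perfect matching in G. -/
open SimpleGraph

variable {V : Type*}

/-- A cubic graph: every vertex has exactly `3` neighbours. -/
def IsCubic (G : SimpleGraph V) : Prop :=
  ∀ v : V, (G.neighborSet v).ncard = 3

/-- Two edges (as elements of `Sym2 V`) are adjacent if they are distinct and
share an endpoint. -/
def EdgesAdj (e₁ e₂ : Sym2 V) : Prop :=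
  e₁ ≠ e₂ ∧ ∃ v : V, v ∈ e₁ ∧ v ∈ e₂

/-- `G` has a proper `3`-edge-coloring. -/
def HasProper3EdgeColoring (G : SimpleGraph V) : Prop :=
  ∃ c : Sym2 V → Fin 3,
    ∀ e₁ ∈ G.edgeSet, ∀ e₂ ∈ G.edgeSet, EdgesAdj e₁ e₂ → c e₁ ≠ c e₂

/-- A bridgeless graph: no edge is a bridge. -/
def IsBridgeless (G : SimpleGraph V) : Prop :=
  ∀ e ∈ G.edgeSet, ¬ G.IsBridge e

/-- A snark: a connected bridgeless cubic graph admitting no proper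
`3`-edge-coloring. -/
def IsSnark (G : SimpleGraph V) : Prop :=
  G.Connected ∧ IsBridgeless G ∧ IsCubic G ∧ ¬ HasProper3EdgeColoring G

/-- A proper abelian coloring of `G` by the abelian group `A`: every edge gets a
nonzero color, adjacent edges get distinct colors, and at every vertex the
colors of the incident edges sum to zero. -/
def IsProperAbelianColoring {A : Type*} [AddCommGroup A]
    (G : SimpleGraph V) (σ : Sym2 V → A) : Prop :=
  (∀ e ∈ G.edgeSet, σ e ≠ 0) ∧
  (∀ e₁ ∈ G.edgeSet, ∀ e₂ ∈ G.edgeSet, EdgesAdj e₁ e₂ → σ e₁ ≠ σ e₂) ∧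
  (∀ v : V, ∑ᶠ e ∈ G.incidenceSet v, σ e = 0)

/-- `F` is a `2`-factor of `G`: a spanning `2`-regular subgraph. -/
def IsTwoFactor (G F : SimpleGraph V) : Prop :=
  F ≤ G ∧ ∀ v : V, (F.neighborSet v).ncard = 2

/-- `M` is a matching contained in the edge set of `F`. -/
def IsMatchingIn (M : Set (Sym2 V)) (F : SimpleGraph V) : Prop :=
  M ⊆ F.edgeSet ∧ ∀ e₁ ∈ M, ∀ e₂ ∈ M, e₁ ≠ e₂ → ¬ ∃ v : V, v ∈ e₁ ∧ v ∈ e₂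

/-- A perfect matching in `F`: a matching covering every vertex. -/
def IsPerfectMatchingIn (M : Set (Sym2 V)) (F : SimpleGraph V) : Prop :=
  IsMatchingIn M F ∧ ∀ v : V, ∃ e ∈ M, v ∈ e

/-- A maximum matching in `F`: a matching of maximum cardinality. -/
def IsMaximumMatchingIn (M : Set (Sym2 V)) (F : SimpleGraph V) : Prop :=
  IsMatchingIn M F ∧ ∀ M' : Set (Sym2 V), IsMatchingIn M' F → M'.ncard ≤ M.ncard

/-- A `3`-vertex of `H`: a vertex of degree `3`. -/
def IsThreeVertex (H : SimpleGraph V) (v : V) : Prop := (H.neighborSet v).ncard = 3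

/-- A `2`-vertex of `H`: a vertex of degree `2`. -/
def IsTwoVertex (H : SimpleGraph V) (v : V) : Prop := (H.neighborSet v).ncard = 2

/-- An `F`-path in `H`: a (nontrivial) path in `H` whose two end-vertices are
`3`-vertices of `H`, whose interior vertices are all `2`-vertices of `H`, and
whose two end-edges belong to `F`. -/
structure FPathIn (H F : SimpleGraph V) where
  a : V
  b : V
  walk : H.Walk a b
  isPath : walk.IsPath
  len_pos : 0 < walk.length
  ends_three : IsThreeVertex H a ∧ IsThreeVertex H b
  interior_two : ∀ w ∈ walk.support, w ≠ a → w ≠ b → IsTwoVertex H w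
  end_edges : ∀ e ∈ walk.edges, (a ∈ e ∨ b ∈ e) → e ∈ F.edgeSet

/-- The vertices of an `F`-path. -/
def FPathIn.supp {H F : SimpleGraph V} (P : FPathIn H F) : Set V :=
  {v | v ∈ P.walk.support}

/-- The edges of an `F`-path. -/
def FPathIn.edgeSet {H F : SimpleGraph V} (P : FPathIn H F) : Set (Sym2 V) :=
  {e | e ∈ P.walk.edges}

/-- An `F`-matching of `H`: a collection of pairwise vertex-disjoint `F`-paths
such that every `3`-vertex of `H` lies on (exactly) one of them. -/
def IsFMatching (H F : SimpleGraph V) (Ps : Set (FPathIn H F)) : Prop :=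
  (∀ P ∈ Ps, ∀ Q ∈ Ps, P ≠ Q → Disjoint P.supp Q.supp) ∧
  (∀ v : V, IsThreeVertex H v → ∃ P ∈ Ps, v ∈ P.supp)

/-- The set of edges lying on the paths of an `F`-matching. -/
def FMatchingEdges {H F : SimpleGraph V} (Ps : Set (FPathIn H F)) : Set (Sym2 V) :=
  {e | ∃ P ∈ Ps, e ∈ P.walk.edges}

/-- The `F`-complement of an `F`-matching: the subgraph of `H` induced by the
edges of `H` not lying on the paths of `Ps`. -/
def FComplement {H F : SimpleGraph V} (Ps : Set (FPathIn H F)) : SimpleGraph V :=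
  H.deleteEdges (FMatchingEdges Ps)

/-- The number of `3`-vertices of `H` lying on a connected component `c` of `K`. -/
noncomputable def threeCount (H : SimpleGraph V) {K : SimpleGraph V} (c : K.ConnectedComponent) : ℕ :=
  {v ∈ c.supp | IsThreeVertex H v}.ncard

/-- The graph `K` (an `F`-complement, whose nontrivial components are the
loops) is `3`-even w.r.t. `H`: every component carries an even number of
`3`-vertices of `H`. -/
def IsThreeEvenComplement (H K : SimpleGraph V) : Prop :=
  ∀ c : K.ConnectedComponent, Even (threeCount H c)

/-- A component of `K` is a `3`-odd loop if it carries an odd number of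
`3`-vertices of `H`. -/
def Is3OddLoop (H : SimpleGraph V) {K : SimpleGraph V} (c : K.ConnectedComponent) : Prop :=
  Odd (threeCount H c)

/-- The number of odd components (odd cycles, for a `2`-factor) of `F`. -/
noncomputable def oddCompCount (F : SimpleGraph V) : ℕ :=
  {c : F.ConnectedComponent | Odd c.supp.ncard}.ncard

/-- The number of even components (even cycles, for a `2`-factor) of `F`. -/
noncomputable def evenCompCount (F : SimpleGraph V) : ℕ :=
  {c : F.ConnectedComponent | Even c.supp.ncard}.ncard

/-- The oddness of `G`: the minimum number of odd cycles in a `2`-factor of `G`. -/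
noncomputable def oddness (G : SimpleGraph V) : ℕ :=
  sInf {n : ℕ | ∃ F : SimpleGraph V, IsTwoFactor G F ∧ oddCompCount F = n}

/-- `v` lies on an odd component (odd cycle) of `F`. -/
def OnOddCycle (F : SimpleGraph V) (v : V) : Prop :=
  Odd ((F.connectedComponentMk v).supp.ncard)

/-- A simple `F`-matching: an `F`-matching such that on each of its paths the
only edges lying on odd cycles of `F` are the edges incident to the
end-vertices. -/
def IsSimpleFMatching (H F : SimpleGraph V) (Ps : Set (FPathIn H F)) : Prop :=
  IsFMatching H F Ps ∧
  ∀ P ∈ Ps, ∀ e ∈ P.walk.edges,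
    (e ∈ F.edgeSet ∧ ∀ w ∈ e, OnOddCycle F w) → (P.a ∈ e ∨ P.b ∈ e)

/-- The set `C ⊆ V` carries a `Θ`-graph structure in `H`: two distinct vertices
joined by three internally disjoint paths whose union is exactly the part of
`H` on `C`. -/
def IsThetaOn (H : SimpleGraph V) (C : Set V) : Prop :=
  ∃ a b : V, a ≠ b ∧ ∃ p q r : H.Walk a b,
    p.IsPath ∧ q.IsPath ∧ r.IsPath ∧ p ≠ q ∧ p ≠ r ∧ q ≠ r ∧
    (∀ w ∈ p.support, w ∈ q.support → w = a ∨ w = b) ∧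
    (∀ w ∈ p.support, w ∈ r.support → w = a ∨ w = b) ∧
    (∀ w ∈ q.support, w ∈ r.support → w = a ∨ w = b) ∧
    C = {w | w ∈ p.support ∨ w ∈ q.support ∨ w ∈ r.support} ∧
    (∀ e ∈ H.edgeSet, (∀ w ∈ e, w ∈ C) → e ∈ p.edges ∨ e ∈ q.edges ∨ e ∈ r.edges)

/-- The set `C ⊆ V` carries a kayak-paddle graph structure in `H`: two
vertex-disjoint cycles joined by a path, their union being exactly the part of
`H` on `C`. -/
def IsKayakPaddleOn (H : SimpleGraph V) (C : Set V) : Prop :=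
  ∃ a b : V, ∃ (c₁ : H.Walk a a) (c₂ : H.Walk b b) (p : H.Walk a b),
    c₁.IsCycle ∧ c₂.IsCycle ∧ p.IsPath ∧
    (∀ w ∈ c₁.support, w ∉ c₂.support) ∧
    (∀ w ∈ p.support, w ∈ c₁.support → w = a) ∧
    (∀ w ∈ p.support, w ∈ c₂.support → w = b) ∧
    C = {w | w ∈ c₁.support ∨ w ∈ c₂.support ∨ w ∈ p.support} ∧
    (∀ e ∈ H.edgeSet, (∀ w ∈ e, w ∈ C) → e ∈ c₁.edges ∨ e ∈ c₂.edges ∨ e ∈ p.edges)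

/-- The set `C ⊆ V` carries an even cycle of `H` whose vertices and edges are
exactly the part of `H` on `C`. -/
def IsEvenCycleOn (H : SimpleGraph V) (C : Set V) : Prop :=
  ∃ a : V, ∃ W : H.Walk a a, W.IsCycle ∧ Even W.length ∧
    C = {w | w ∈ W.support} ∧
    (∀ e ∈ H.edgeSet, (∀ w ∈ e, w ∈ C) → e ∈ W.edges)

/-- `Meven` is a perfect matching of the even part `F_even` of the `2`-factor
`F`: a matching of `F` using only edges on even cycles and covering all
vertices of even cycles. -/
def IsPerfectMatchingOfEvenPart (Meven : Set (Sym2 V)) (F : SimpleGraph V) : Prop :=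
  IsMatchingIn Meven F ∧
  (∀ e ∈ Meven, ∀ w ∈ e, ¬ OnOddCycle F w) ∧
  (∀ v : V, ¬ OnOddCycle F v → ∃ e ∈ Meven, v ∈ e)

/-- Two odd components `c₁`, `c₂` of `F` are linked in `H_odd = G − M_even`:
there is a path of `H_odd` from `c₁` to `c₂` all of whose interior vertices
avoid odd cycles of `F` (i.e. are `2`-vertices of `H_odd`). -/
def OddCompLinked (G F : SimpleGraph V) (Meven : Set (Sym2 V))
    (c₁ c₂ : F.ConnectedComponent) : Prop :=
  ∃ u v : V, u ∈ c₁.supp ∧ v ∈ c₂.supp ∧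
    ∃ W : (G.deleteEdges Meven).Walk u v, W.IsPath ∧ 0 < W.length ∧
      ∀ w ∈ W.support, w ≠ u → w ≠ v → ¬ OnOddCycle F w

/-- The odd-cycle-incidence graph `K_odd`: vertices are the odd cycles of `F`,
two of them being adjacent iff they are linked by a path of
`H_odd = G − M_even` with all interior vertices `2`-vertices of `H_odd`
(this is `H_odd` with the edges of `F_odd` contracted and the `2`-vertices
suppressed). -/
def Kodd (G F : SimpleGraph V) (Meven : Set (Sym2 V)) :
    SimpleGraph {c : F.ConnectedComponent // Odd c.supp.ncard} where
  Adj c₁ c₂ := c₁ ≠ c₂ ∧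
    (OddCompLinked G F Meven c₁.1 c₂.1 ∨ OddCompLinked G F Meven c₂.1 c₁.1)
  symm := ⟨fun c₁ c₂ h => ⟨h.1.symm, h.2.symm⟩⟩
  loopless := ⟨fun c h => h.1 rfl⟩

/-- The set of edges of `K` lying on the connected component `c` of `K`. -/
def compEdgeSet (K : SimpleGraph V) (c : K.ConnectedComponent) : Set (Sym2 V) :=
  {e ∈ K.edgeSet | ∃ w, w ∈ e ∧ w ∈ c.supp}

/-- The set `E_Ps` of end-edges of the paths of an `F`-matching `Ps`. -/
def endEdges {H F : SimpleGraph V} (Ps : Set (FPathIn H F)) : Set (Sym2 V) :=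
  {e | ∃ P ∈ Ps, e ∈ P.walk.edges ∧ (P.a ∈ e ∨ P.b ∈ e)}

/-- The edge set attached to a vertex of the loop-cycle-incidence graph `B`:
a component of `F − E_Ps`, a loop of the `F`-complement `ℒ`, or a path of `Ps`. -/
def bEdgeSet (F : SimpleGraph V) {H : SimpleGraph V} (Ps : Set (FPathIn H F)) :
    (F.deleteEdges (endEdges Ps)).ConnectedComponent ⊕
      ((FComplement Ps).ConnectedComponent ⊕ ↥Ps) → Set (Sym2 V)
  | Sum.inl C => compEdgeSet (F.deleteEdges (endEdges Ps)) C
  | Sum.inr (Sum.inl c) => compEdgeSet (FComplement Ps) c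
  | Sum.inr (Sum.inr P) => FPathIn.edgeSet P.1

/-- The loop-cycle-incidence graph `B`: a bipartite graph on
`𝒞* ⊕ (ℒ ⊕ Ps)`, where `𝒞*` is the set of components of `F − E_Ps`, `ℒ` the
set of components (loops) of the `F`-complement and `Ps` the paths of the
`F`-matching; a component of `F − E_Ps` is adjacent to a loop/path iff they
share an edge of `G`. -/
def LoopCycleIncidence (F : SimpleGraph V) {H : SimpleGraph V}
    (Ps : Set (FPathIn H F)) :
    SimpleGraph ((F.deleteEdges (endEdges Ps)).ConnectedComponent ⊕
      ((FComplement Ps).ConnectedComponent ⊕ ↥Ps)) where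
  Adj a b := ((a.isLeft ∧ b.isRight) ∨ (a.isRight ∧ b.isLeft)) ∧
    ∃ e, e ∈ bEdgeSet F Ps a ∧ e ∈ bEdgeSet F Ps b
  symm := by
    constructor
    rintro a b ⟨hs, e, h₁, h₂⟩
    exact ⟨by tauto, e, h₂, h₁⟩
  loopless := by
    constructor
    rintro a ⟨hs, -⟩
    rcases a with a | a <;> simp_all

/-- Remove a set of vertices from a graph (keeping them as isolated vertices):
used to form `B − Ps`. -/
def removeVerts {W : Type*} (B : SimpleGraph W) (S : Set W) : SimpleGraph W where
  Adj a b := B.Adj a b ∧ a ∉ S ∧ b ∉ S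
  symm := ⟨fun a b h => ⟨h.1.symm, h.2.2, h.2.1⟩⟩
  loopless := ⟨fun a h => B.loopless.irrefl a h.1⟩

/-- The vertices of `B` corresponding to the paths of `Ps`. -/
def PVerts (F : SimpleGraph V) {H : SimpleGraph V} (Ps : Set (FPathIn H F)) :
    Set ((F.deleteEdges (endEdges Ps)).ConnectedComponent ⊕
      ((FComplement Ps).ConnectedComponent ⊕ ↥Ps)) :=
  {x | ∃ P : ↥Ps, x = Sum.inr (Sum.inr P)}

/-- A permutation snark: a snark having a `2`-factor consisting of precisely
two chordless cycles. -/
def IsPermutationSnark (G : SimpleGraph V) : Prop :=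
  IsSnark G ∧ ∃ F : SimpleGraph V, IsTwoFactor G F ∧
    Nat.card F.ConnectedComponent = 2 ∧
    ∀ u v : V, G.Adj u v → ¬ F.Adj u v →
      F.connectedComponentMk u ≠ F.connectedComponentMk v

/-- The graph obtained from `H` (all of whose vertices have degree `2` or `3`)
by suppressing the degree-`2` vertices is `3`-edge-colorable: there is a
`3`-coloring of the edges which is constant through `2`-vertices and proper at
`3`-vertices. -/
def SuppressedThreeEdgeColorable (H : SimpleGraph V) : Prop :=
  ∃ c : Sym2 V → Fin 3,
    (∀ v : V, IsThreeVertex H v →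
      ∀ e₁ ∈ H.incidenceSet v, ∀ e₂ ∈ H.incidenceSet v, e₁ ≠ e₂ → c e₁ ≠ c e₂) ∧
    (∀ v : V, IsTwoVertex H v →
      ∀ e₁ ∈ H.incidenceSet v, ∀ e₂ ∈ H.incidenceSet v, c e₁ = c e₂)

/-- `e_r(G)`: the minimum cardinality of a set of pairwise non-adjacent edges
of `G` whose removal, followed by suppression of the resulting `2`-vertices,
yields a `3`-edge-colorable (cubic) graph. -/
noncomputable def edgeReductionNumber (G : SimpleGraph V) : ℕ :=
  sInf {n : ℕ | ∃ R : Set (Sym2 V), IsMatchingIn R G ∧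
    SuppressedThreeEdgeColorable (G.deleteEdges R) ∧ R.ncard = n}

/-!
At a vertex the three colors sum to zero, so their `ℤ_2`-coordinates contain an even number of
ones and at least one edge has `y = 0`. If two edges had `y = 0`, then all three would, and their
`ℤ_k`-coordinates would be three distinct non-zero elements of `ℤ_k` summing to zero, which do not
exist for `k = 4, 5`.
-/

namespace ZMod

lemma add_add_ne_zero_of_ne {k : ℕ} (hk : k = 4 ∨ k = 5) {a b c : ZMod k} (ha : a ≠ 0)
    (hb : b ≠ 0) (hc : c ≠ 0) (hab : a ≠ b) (hac : a ≠ c) (hbc : b ≠ c) : a + b + c ≠ 0 := by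
  rcases hk with rfl | rfl <;> revert a b c <;> decide

lemma eq_zero_or_of_add_add_eq_zero {a b c : ZMod 2} (h : a + b + c = 0) :
    a = 0 ∨ b = 0 ∨ c = 0 := by
  revert a b c; decide

end ZMod

lemma snd_ne_zero_of_snd_eq_zero {k : ℕ} (hk : k = 4 ∨ k = 5) {p q r : ZMod k × ZMod 2}
    (hp : p ≠ 0) (hq : q ≠ 0) (hr : r ≠ 0) (hpq : p ≠ q) (hpr : p ≠ r) (hqr : q ≠ r)
    (hsum : p + q + r = 0) (hp₂ : p.2 = 0) : q.2 ≠ 0 := by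
  intro hq₂
  have hr₂ : r.2 = 0 := by simpa [hp₂, hq₂] using congrArg Prod.snd hsum
  exact ZMod.add_add_ne_zero_of_ne hk (fun h => hp (Prod.ext h hp₂))
    (fun h => hq (Prod.ext h hq₂)) (fun h => hr (Prod.ext h hr₂))
    (fun h => hpq (Prod.ext h (hp₂.trans hq₂.symm)))
    (fun h => hpr (Prod.ext h (hp₂.trans hr₂.symm)))
    (fun h => hqr (Prod.ext h (hq₂.trans hr₂.symm))) (congrArg Prod.fst hsum)

lemma Set.exists_eq_insert_insert_singleton_of_ncard_eq_three {α : Type*} {s : Set α}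
    (hs : s.ncard = 3) {x y : α} (hx : x ∈ s) (hy : y ∈ s) (hxy : x ≠ y) :
    ∃ z, x ≠ z ∧ y ≠ z ∧ s = {x, y, z} := by
  have hxys : {x, y} ⊆ s := Set.pair_subset hx hy
  obtain ⟨z, hz⟩ : ∃ z, s \ {x, y} = {z} := Set.ncard_eq_one.mp <| by
    rw [Set.ncard_sdiff hxys, hs, Set.ncard_pair hxy]
  have hz_mem : z ∈ s \ {x, y} := hz ▸ rfl
  simp only [Set.mem_sdiff, Set.mem_insert_iff, Set.mem_singleton_iff, not_or] at hz_mem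
  refine ⟨z, Ne.symm hz_mem.2.1, Ne.symm hz_mem.2.2, ?_⟩
  rw [← Set.sdiff_union_of_subset hxys, hz, Set.union_comm, Set.insert_union, Set.singleton_union]

section CubicGraph

variable {G : SimpleGraph V}

lemma IsCubic.ncard_incidenceSet (hG : IsCubic G) (v : V) : (G.incidenceSet v).ncard = 3 := by
  classical
  rw [← hG v, ← Nat.card_coe_set_eq, ← Nat.card_coe_set_eq]
  exact Nat.card_congr (G.incidenceSetEquivNeighborSet v)

section Coloring

variable {A : Type*} [AddCommGroup A] {σ : Sym2 V → A}

lemma IsProperAbelianColoring.add_add_eq_zero (hσ : IsProperAbelianColoring G σ) {v : V}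
    {e₁ e₂ e₃ : Sym2 V} (h₁₂ : e₁ ≠ e₂) (h₁₃ : e₁ ≠ e₃) (h₂₃ : e₂ ≠ e₃)
    (hv : G.incidenceSet v = {e₁, e₂, e₃}) : σ e₁ + σ e₂ + σ e₃ = 0 := by
  have := hσ.2.2 v
  rwa [hv, finsum_mem_insert _ (by simp [h₁₂, h₁₃]) (Set.toFinite _), finsum_mem_pair h₂₃,
    ← add_assoc] at this

lemma IsProperAbelianColoring.ne_of_mem_incidenceSet (hσ : IsProperAbelianColoring G σ)
    {v : V} {e e' : Sym2 V} (he : e ∈ G.incidenceSet v) (he' : e' ∈ G.incidenceSet v)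
    (hne : e ≠ e') : σ e ≠ σ e' :=
  hσ.2.1 e he.1 e' he'.1 ⟨hne, v, he.2, he'.2⟩

end Coloring

section ProductColoring

variable {A : Type*} [AddCommGroup A] {σ : Sym2 V → A × ZMod 2}

lemma IsProperAbelianColoring.exists_snd_eq_zero (hG : IsCubic G)
    (hσ : IsProperAbelianColoring G σ) (v : V) : ∃ e ∈ G.incidenceSet v, (σ e).2 = 0 := by
  obtain ⟨e₁, e₂, e₃, h₁₂, h₁₃, h₂₃, hv⟩ := Set.ncard_eq_three.mp (hG.ncard_incidenceSet v)
  have hsum := congrArg Prod.snd (hσ.add_add_eq_zero h₁₂ h₁₃ h₂₃ hv)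
  simp only [Prod.snd_add, Prod.snd_zero] at hsum
  rw [hv]
  rcases ZMod.eq_zero_or_of_add_add_eq_zero hsum with h | h | h
  exacts [⟨e₁, by simp, h⟩, ⟨e₂, by simp, h⟩, ⟨e₃, by simp, h⟩]

end ProductColoring

lemma IsProperAbelianColoring.eq_of_snd_eq_zero {k : ℕ} (hk : k = 4 ∨ k = 5)
    {σ : Sym2 V → ZMod k × ZMod 2} (hG : IsCubic G) (hσ : IsProperAbelianColoring G σ) {v : V}
    {e e' : Sym2 V} (he : e ∈ G.incidenceSet v) (he' : e' ∈ G.incidenceSet v)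
    (hy : (σ e).2 = 0) (hy' : (σ e').2 = 0) : e = e' := by
  by_contra hne
  obtain ⟨f, hef, he'f, hv⟩ :=
    Set.exists_eq_insert_insert_singleton_of_ncard_eq_three (hG.ncard_incidenceSet v) he he' hne
  have hf : f ∈ G.incidenceSet v := by simp [hv]
  exact snd_ne_zero_of_snd_eq_zero hk (hσ.1 e he.1) (hσ.1 e' he'.1) (hσ.1 f hf.1)
    (hσ.ne_of_mem_incidenceSet he he' hne) (hσ.ne_of_mem_incidenceSet he hf hef)
    (hσ.ne_of_mem_incidenceSet he' hf he'f) (hσ.add_add_eq_zero hne hef he'f hv) hy hy'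

end CubicGraph

theorem statement0_general {V : Type*} (G : SimpleGraph V) (hG : IsSnark G)
    (k : ℕ) (hk : k = 4 ∨ k = 5)
    (σ : Sym2 V → ZMod k × ZMod 2)
    (hσ : IsProperAbelianColoring G σ) :
    IsPerfectMatchingIn {e ∈ G.edgeSet | (σ e).2 = 0} G := by
  obtain ⟨-, -, hcubic, -⟩ := hG
  refine ⟨⟨fun e he => he.1, ?_⟩, fun v => ?_⟩
  · rintro e₁ ⟨he₁, hy₁⟩ e₂ ⟨he₂, hy₂⟩ hne ⟨v, hv₁, hv₂⟩
    exact hne (hσ.eq_of_snd_eq_zero hk hcubic ⟨he₁, hv₁⟩ ⟨he₂, hv₂⟩ hy₁ hy₂)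
  · obtain ⟨e, ⟨he, hv⟩, hy⟩ := hσ.exists_snd_eq_zero hcubic v
    exact ⟨e, ⟨he, hy⟩, hv⟩

theorem statement0 {V : Type*} [Fintype V] (G : SimpleGraph V) (hG : IsSnark G)
    (k : ℕ) (hk : k = 4 ∨ k = 5)
    (σ : Sym2 V → ZMod k × ZMod 2)
    (hσ : IsProperAbelianColoring G σ) :
    IsPerfectMatchingIn {e ∈ G.edgeSet | (σ e).2 = 0} G :=
  statement0_general G hG k hk σ hσ
end

section
/- Let G be a snark of oddness two and F a 2-factor of G with precisely two odd cycles. Then there exists a maximum matching M in F such that H = G − M has a simple F-matching. -/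
open SimpleGraph

variable {V : Type*}

/-!
Let `C₁`, `C₂` be the two odd cycles of `F` and `M_even` a perfect matching of the even cycles. In
`K = G - M_even - E(C₁ ∪ C₂)` the vertices of the odd cycles have degree `1` and all others degree
`2`. Every component of `K` contains an even number of degree-`1` vertices while `|C₁|` is odd, so
some path `q` of `K` joins `a ∈ C₁` to `b ∈ C₂`, and its interior avoids the odd cycles. Choose
`F`-neighbours `u` of `a` and `v` of `b`, and extend `M_even` by near-perfect matchings of `C₁` and
`C₂` missing `u` and `v`. The result `M` misses one vertex per odd cycle, so it is maximum. In
`G - M` the vertices `u` and `v` are the only 3-vertices, and `u a q b v` is a simple `F`-path.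
-/

section Matchings

variable {F : SimpleGraph V} {M N : Set (Sym2 V)}

def coveredVerts (M : Set (Sym2 V)) : Set V := {w | ∃ e ∈ M, w ∈ e}

lemma coveredVerts_union : coveredVerts (M ∪ N) = coveredVerts M ∪ coveredVerts N := by
  ext w; simp only [coveredVerts, Set.mem_union, Set.mem_ofPred_eq]; grind

lemma coveredVerts_biUnion {ι : Type*} (S : Set ι) (N : ι → Set (Sym2 V)) :
    coveredVerts (⋃ i ∈ S, N i) = ⋃ i ∈ S, coveredVerts (N i) := by
  ext w; simp only [coveredVerts, Set.mem_iUnion, Set.mem_ofPred_eq]; grind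

lemma IsMatchingIn.eq_of_mem (hM : IsMatchingIn M F) {e e' : Sym2 V} (he : e ∈ M) (he' : e' ∈ M)
    {w : V} (hw : w ∈ e) (hw' : w ∈ e') : e = e' := by
  by_contra hne
  exact hM.2 e he e' he' hne ⟨w, hw, hw'⟩

lemma IsMatchingIn.mono (hM : IsMatchingIn M F) (h : N ⊆ M) : IsMatchingIn N F :=
  ⟨h.trans hM.1, fun e he e' he' => hM.2 e (h he) e' (h he')⟩

lemma isMatchingIn_biUnion {ι : Type*} {S : Set ι} {N : ι → Set (Sym2 V)}
    (hN : ∀ i ∈ S, IsMatchingIn (N i) F) (hdisj : S.PairwiseDisjoint (coveredVerts ∘ N)) :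
    IsMatchingIn (⋃ i ∈ S, N i) F := by
  refine ⟨Set.iUnion₂_subset fun i hi => (hN i hi).1, ?_⟩
  simp only [Set.mem_iUnion]
  rintro e ⟨i, hi, he⟩ e' ⟨j, hj, he'⟩ hne ⟨w, hw, hw'⟩
  obtain rfl | hij := eq_or_ne i j
  · exact (hN i hi).2 e he e' he' hne ⟨w, hw, hw'⟩
  · exact Set.disjoint_left.1 (hdisj hi hj hij) ⟨e, he, hw⟩ ⟨e', he', hw'⟩

lemma IsMatchingIn.union (hM : IsMatchingIn M F) (hN : IsMatchingIn N F)
    (hdisj : Disjoint (coveredVerts M) (coveredVerts N)) : IsMatchingIn (M ∪ N) F := by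
  refine ⟨Set.union_subset hM.1 hN.1, ?_⟩
  rintro e (he | he) e' (he' | he') hne ⟨w, hw, hw'⟩
  · exact hM.2 e he e' he' hne ⟨w, hw, hw'⟩
  · exact Set.disjoint_left.1 hdisj ⟨e, he, hw⟩ ⟨e', he', hw'⟩
  · exact Set.disjoint_left.1 hdisj ⟨e', he', hw'⟩ ⟨e, he, hw⟩
  · exact hN.2 e he e' he' hne ⟨w, hw, hw'⟩

lemma IsMatchingIn.ncard_coveredVerts [Finite V] (hM : IsMatchingIn M F) :
    (coveredVerts M).ncard = 2 * M.ncard := by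
  have hcov : coveredVerts M = ⋃ e ∈ M, {w | w ∈ e} := by
    ext w; simp [coveredVerts]
  have htwo : ∀ e ∈ M, {w | w ∈ e}.ncard = 2 := by
    intro e he
    induction e using Sym2.ind with
    | _ x y =>
      rw [← Set.ncard_pair (F.ne_of_adj (hM.1 he))]
      congr 1
      ext; simp
  rw [hcov, (Set.toFinite M).ncard_biUnion (fun _ _ => Set.toFinite _)]
  · rw [finsum_mem_congr rfl htwo, ← finsum_one, mul_finsum_mem]
    simp
  · intro e he e' he' hne
    exact Set.disjoint_left.2 fun w hw hw' => hM.2 e he e' he' hne ⟨w, hw, hw'⟩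

lemma SimpleGraph.ConnectedComponent.mem_supp_of_mem_edge (c : F.ConnectedComponent) {e : Sym2 V}
    (he : e ∈ F.edgeSet) {w w' : V} (hw : w ∈ e) (hw' : w' ∈ e) (hwc : w ∈ c.supp) :
    w' ∈ c.supp := by
  induction e using Sym2.ind with
  | _ x y =>
    rw [mem_edgeSet] at he
    rcases Sym2.mem_iff.1 hw with rfl | rfl <;> rcases Sym2.mem_iff.1 hw' with rfl | rfl
    · exact hwc
    · exact (c.mem_supp_congr_adj he).1 hwc
    · exact (c.mem_supp_congr_adj he).2 hwc
    · exact hwc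

lemma IsMatchingIn.exists_mem_supp_notMem_coveredVerts [Finite V] (hM : IsMatchingIn M F)
    {c : F.ConnectedComponent} (hc : Odd c.supp.ncard) : ∃ w ∈ c.supp, w ∉ coveredVerts M := by
  by_contra! hcov
  have hN : coveredVerts {e ∈ M | ∃ w ∈ e, w ∈ c.supp} = c.supp := by
    ext w
    constructor
    · rintro ⟨e, ⟨he, w', hw'e, hw'c⟩, hwe⟩
      exact c.mem_supp_of_mem_edge (hM.1 he) hw'e hwe hw'c
    · intro hw
      obtain ⟨e, he, hwe⟩ := hcov w hw
      exact ⟨e, ⟨he, w, hwe, hw⟩, hwe⟩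
  rw [← hN, (hM.mono fun e he => he.1).ncard_coveredVerts] at hc
  exact Nat.not_odd_iff_even.2 (even_two_mul _) hc

lemma IsMatchingIn.oddCompCount_le_ncard_compl_coveredVerts [Finite V]
    (hM : IsMatchingIn M F) : oddCompCount F ≤ (coveredVerts M)ᶜ.ncard := by
  have hsub : {c : F.ConnectedComponent | Odd c.supp.ncard} ⊆
      F.connectedComponentMk '' (coveredVerts M)ᶜ := by
    intro c hc
    obtain ⟨w, hwc, hw⟩ := hM.exists_mem_supp_notMem_coveredVerts hc
    exact ⟨w, hw, hwc⟩
  exact (Set.ncard_le_ncard hsub).trans (Set.ncard_image_le (Set.toFinite _))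

lemma IsMatchingIn.isMaximumMatchingIn [Finite V] (hM : IsMatchingIn M F)
    (h : (coveredVerts M)ᶜ.ncard ≤ oddCompCount F) : IsMaximumMatchingIn M F := by
  refine ⟨hM, fun M' hM' => ?_⟩
  have h' := hM'.oddCompCount_le_ncard_compl_coveredVerts
  have hcard := Set.ncard_add_ncard_compl (coveredVerts M)
  have hcard' := Set.ncard_add_ncard_compl (coveredVerts M')
  rw [hM.ncard_coveredVerts] at hcard
  rw [hM'.ncard_coveredVerts] at hcard'
  omega

end Matchings

namespace SimpleGraph.Walk

variable {G : SimpleGraph V}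

def altEdges : {u v : V} → G.Walk u v → List (Sym2 V)
  | _, _, nil => []
  | u, _, cons (v := x) _ nil => [s(u, x)]
  | u, _, cons (v := x) _ (cons _ p) => s(u, x) :: altEdges p

lemma altEdges_subset_edges {u v : V} (p : G.Walk u v) : ∀ e ∈ p.altEdges, e ∈ p.edges := by
  induction p using altEdges.induct <;> simp_all [altEdges]

lemma mem_support_of_mem_altEdges {u v w : V} {p : G.Walk u v} {e : Sym2 V}
    (he : e ∈ p.altEdges) (hw : w ∈ e) : w ∈ p.support :=
  p.mem_support_of_mem_edges (p.altEdges_subset_edges e he) hw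

lemma IsPath.coveredVerts_altEdges {u v : V} {p : G.Walk u v} (hp : p.IsPath) :
    coveredVerts {e | e ∈ p.altEdges} = {w | w ∈ p.support ∧ (w = v → Odd p.length)} := by
  induction p using altEdges.induct with
  | case1 => ext; simp [coveredVerts, altEdges]
  | case2 => ext; simp [coveredVerts, altEdges]
  | case3 u _ x _ _ _ p ih =>
    rw [cons_isPath_iff, cons_isPath_iff, support_cons] at hp
    obtain ⟨⟨hp, hx⟩, hu⟩ := hp
    have hv := p.end_mem_support
    have ih := Set.ext_iff.1 (ih hp)
    ext w
    simp only [coveredVerts, Set.mem_ofPred_eq] at ih ⊢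
    simp only [altEdges, List.mem_cons, exists_eq_or_imp, Sym2.mem_iff, support_cons, length_cons,
      ih, Nat.odd_add_one, not_not]
    grind

lemma IsPath.isMatchingIn_altEdges {u v : V} {p : G.Walk u v} (hp : p.IsPath) :
    IsMatchingIn {e | e ∈ p.altEdges} G := by
  refine ⟨fun e he => p.edges_subset_edgeSet (p.altEdges_subset_edges e he), ?_⟩
  induction p using altEdges.induct with
  | case1 => simp [altEdges]
  | case2 => simp [altEdges]
  | case3 u _ x _ _ _ p ih =>
    rw [cons_isPath_iff, cons_isPath_iff, support_cons] at hp
    obtain ⟨⟨hp, hx⟩, hu⟩ := hp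
    have hux : ∀ w ∈ s(u, x), w ∉ p.support := by
      intro w hw hwp
      rcases Sym2.mem_iff.1 hw with rfl | rfl
      · exact hu (List.mem_cons_of_mem _ hwp)
      · exact hx hwp
    simp only [altEdges, Set.mem_ofPred_eq, List.mem_cons]
    rintro e₁ (rfl | he₁) e₂ (rfl | he₂) hne ⟨w, hw₁, hw₂⟩
    · exact hne rfl
    · exact hux w hw₁ (mem_support_of_mem_altEdges he₂ hw₂)
    · exact hux w hw₂ (mem_support_of_mem_altEdges he₁ hw₁)
    · exact ih hp e₁ he₁ e₂ he₂ hne ⟨w, hw₁, hw₂⟩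

lemma IsPath.ncard_support {u v : V} {p : G.Walk u v} (hp : p.IsPath) :
    {w | w ∈ p.support}.ncard = p.length + 1 := by
  classical
  rw [← p.length_support, ← List.toFinset_card_of_nodup hp.support_nodup, ← Set.ncard_coe_finset]
  congr 1
  ext; simp

lemma IsPath.two_le_ncard_neighborSet [Finite V] {u v w : V} {p : G.Walk u v} (hp : p.IsPath)
    (hw : w ∈ p.support) (hwu : w ≠ u) (hwv : w ≠ v) : 2 ≤ (G.neighborSet w).ncard := by
  obtain ⟨i, rfl, hi⟩ := mem_support_iff_exists_getVert.1 hw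
  have hi0 : i ≠ 0 := by rintro rfl; simp at hwu
  have hil : i < p.length := lt_of_le_of_ne hi (by rintro rfl; simp at hwv)
  rw [← hp.ncard_neighborSet_toSubgraph_internal_eq_two hi0 hil]
  exact Set.ncard_le_ncard (p.toSubgraph.neighborSet_subset _)

end SimpleGraph.Walk

section TwoRegular

variable {F : SimpleGraph V} [Finite V] (hF : ∀ v, (F.neighborSet v).ncard = 2)
include hF

lemma exists_isMatchingIn_coveredVerts_eq_supp {c : F.ConnectedComponent} {u : V}
    (hu : u ∈ c.supp) :
    ∃ N, IsMatchingIn N F ∧ coveredVerts N = {w | w ∈ c.supp ∧ (w = u → Even c.supp.ncard)} := by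
  obtain ⟨p, hp, hsupp⟩ := IsCycles.exists_cycle_toSubgraph_verts_eq_connectedComponentSupp
    (fun v _ => hF v) hu (Set.nonempty_of_ncard_ne_zero (by simp [hF u]))
  cases p with
  | nil => exact absurd rfl hp.ne_nil
  | cons h q =>
    have hq := ((Walk.cons_isCycle_iff q h).1 hp).1
    have hqsupp : {w | w ∈ q.support} = c.supp := by
      rw [← hsupp, Walk.verts_toSubgraph]
      ext w
      simp only [Walk.support_cons, List.mem_cons, Set.mem_ofPred_eq]
      grind [Walk.end_mem_support]
    refine ⟨_, hq.isMatchingIn_altEdges, ?_⟩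
    rw [hq.coveredVerts_altEdges, ← hqsupp, hq.ncard_support, Nat.even_add_one,
      Nat.not_even_iff_odd]
    rfl

lemma exists_isMatchingIn_coveredVerts_eq_supp_diff {c : F.ConnectedComponent} {u : V}
    (hc : Odd c.supp.ncard) (hu : u ∈ c.supp) :
    ∃ N, IsMatchingIn N F ∧ coveredVerts N = c.supp \ {u} := by
  obtain ⟨N, hN, hcov⟩ := exists_isMatchingIn_coveredVerts_eq_supp hF hu
  refine ⟨N, hN, hcov.trans ?_⟩
  ext w
  simp [← Nat.not_odd_iff_even, hc]

lemma exists_isMatchingIn_coveredVerts_eq_not_onOddCycle :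
    ∃ M, IsMatchingIn M F ∧ coveredVerts M = {w | ¬ OnOddCycle F w} := by
  choose N hN hcov using fun c : F.ConnectedComponent =>
    exists_isMatchingIn_coveredVerts_eq_supp hF c.exists_rep.choose_spec
  refine ⟨⋃ c ∈ {c : F.ConnectedComponent | Even c.supp.ncard}, N c,
    isMatchingIn_biUnion (fun c _ => hN c) fun c _ c' _ hcc' => ?_, ?_⟩
  · show Disjoint (coveredVerts (N c)) (coveredVerts (N c'))
    rw [hcov, hcov]
    exact (F.pairwise_disjoint_supp_connectedComponent hcc').mono (fun _ hw => hw.1)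
      fun _ hw => hw.1
  · rw [coveredVerts_biUnion]
    ext w
    simp only [hcov, OnOddCycle, Nat.not_odd_iff_even, Set.mem_iUnion, Set.mem_ofPred_eq,
      ConnectedComponent.mem_supp_iff]
    constructor
    · rintro ⟨c, hc, rfl, -⟩
      exact hc
    · intro hw
      exact ⟨_, hw, rfl, fun _ => hw⟩

end TwoRegular

section DeleteEdges

variable {G F : SimpleGraph V} {M : Set (Sym2 V)} {v w : V}

lemma SimpleGraph.neighborSet_deleteEdges (G : SimpleGraph V) (S : Set (Sym2 V)) (v : V) :
    (G.deleteEdges S).neighborSet v = G.neighborSet v \ {w | s(v, w) ∈ S} := by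
  ext; simp

lemma neighborSet_deleteEdges_of_notMem_coveredVerts (hv : v ∉ coveredVerts M) :
    (G.deleteEdges M).neighborSet v = G.neighborSet v := by
  rw [G.neighborSet_deleteEdges]
  exact sdiff_eq_left.2 (Set.disjoint_left.2 fun w _ hw => hv ⟨_, hw, Sym2.mem_mk_left v w⟩)

lemma adj_deleteEdges_of_notMem_coveredVerts (hv : v ∉ coveredVerts M) (h : G.Adj v w) :
    (G.deleteEdges M).Adj v w := by
  rwa [← mem_neighborSet, neighborSet_deleteEdges_of_notMem_coveredVerts hv]

lemma IsMatchingIn.exists_setOf_mk_mem_eq_singleton (hM : IsMatchingIn M F)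
    (hv : v ∈ coveredVerts M) : ∃ p, F.Adj v p ∧ {w | s(v, w) ∈ M} = {p} := by
  obtain ⟨e, he, hve⟩ := hv
  obtain ⟨p, rfl⟩ := Sym2.mem_iff_exists.1 hve
  refine ⟨p, hM.1 he, Set.ext fun w => ⟨fun hw => ?_, fun hw => hw ▸ he⟩⟩
  exact Sym2.congr_right.1 (hM.eq_of_mem hw he (Sym2.mem_mk_left v w) (Sym2.mem_mk_left v p))

lemma IsMatchingIn.ncard_neighborSet_deleteEdges [Finite V] (hM : IsMatchingIn M F)
    (hFG : F ≤ G) (hv : v ∈ coveredVerts M) :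
    ((G.deleteEdges M).neighborSet v).ncard = (G.neighborSet v).ncard - 1 := by
  obtain ⟨p, hp, hset⟩ := hM.exists_setOf_mk_mem_eq_singleton hv
  rw [G.neighborSet_deleteEdges, hset,
    Set.ncard_sdiff_singleton_of_mem (show p ∈ G.neighborSet v from hFG hp)]

lemma isThreeVertex_deleteEdges_of_notMem_coveredVerts (hG : IsCubic G)
    (hv : v ∉ coveredVerts M) : IsThreeVertex (G.deleteEdges M) v := by
  rw [IsThreeVertex, neighborSet_deleteEdges_of_notMem_coveredVerts hv, hG v]

lemma IsMatchingIn.isTwoVertex_deleteEdges [Finite V] (hM : IsMatchingIn M F) (hFG : F ≤ G)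
    (hG : IsCubic G) (hv : v ∈ coveredVerts M) : IsTwoVertex (G.deleteEdges M) v := by
  rw [IsTwoVertex, hM.ncard_neighborSet_deleteEdges hFG hv, hG v]

end DeleteEdges

section Handshake

variable [Finite V] (K : SimpleGraph V)

lemma SimpleGraph.even_ncard_setOf_odd_ncard_neighborSet :
    Even {w | Odd (K.neighborSet w).ncard}.ncard := by
  classical
  have := Fintype.ofFinite V
  convert K.even_card_odd_degree_vertices using 1
  rw [← Set.ncard_coe_finset, Finset.coe_filter]
  simp only [← card_neighborSet_eq_degree, ← Nat.card_eq_fintype_card, Nat.card_coe_set_eq,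
    Finset.mem_univ, true_and]

lemma SimpleGraph.even_ncard_setOf_odd_ncard_neighborSet_of_closed {R : Set V}
    (hR : ∀ x ∈ R, ∀ y, K.Adj x y → y ∈ R) :
    Even {w ∈ R | Odd (K.neighborSet w).ncard}.ncard := by
  set K' := K.deleteEdges {e | ∀ w ∈ e, w ∉ R}
  have hin : ∀ w ∈ R, K'.neighborSet w = K.neighborSet w := fun w hw =>
    neighborSet_deleteEdges_of_notMem_coveredVerts fun ⟨e, he, hwe⟩ => he w hwe hw
  have hout : ∀ w ∉ R, K'.neighborSet w = ∅ := by
    intro w hw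
    ext x
    simp only [K', mem_neighborSet, deleteEdges_adj, Set.mem_ofPred_eq, Sym2.mem_iff,
      forall_eq_or_imp, forall_eq, Set.mem_empty_iff_false, iff_false, not_and, not_not]
    exact fun hwx h => hw (hR x (h hw) w hwx.symm)
  convert K'.even_ncard_setOf_odd_ncard_neighborSet using 2
  ext w
  by_cases hw : w ∈ R <;> simp [hin, hout, hw]

lemma SimpleGraph.exists_reachable_of_odd_ncard {A : Set V} (hA : Odd A.ncard)
    (hAodd : ∀ w ∈ A, Odd (K.neighborSet w).ncard) :
    ∃ x ∈ A, ∃ y ∉ A, Odd (K.neighborSet y).ncard ∧ K.Reachable x y := by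
  by_contra! h
  set R := {y | ∃ a ∈ A, K.Reachable a y}
  have hR : ∀ x ∈ R, ∀ y, K.Adj x y → y ∈ R :=
    fun x ⟨a, ha, hax⟩ y hxy => ⟨a, ha, hax.trans hxy.reachable⟩
  have hRA : {w ∈ R | Odd (K.neighborSet w).ncard} = A := by
    ext w
    refine ⟨fun ⟨⟨a, ha, haw⟩, hw⟩ => ?_, fun hw => ⟨⟨w, hw, .refl w⟩, hAodd w hw⟩⟩
    by_contra hwA
    exact h a ha w hwA hw haw
  rw [← hRA] at hA
  exact Nat.not_odd_iff_even.2 (K.even_ncard_setOf_odd_ncard_neighborSet_of_closed hR) hA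

end Handshake

section OddCycles

variable {G F : SimpleGraph V} {Meven : Set (Sym2 V)} {v w : V}

def oddCycleEdges (F : SimpleGraph V) : Set (Sym2 V) :=
  {e | e ∈ F.edgeSet ∧ ∀ w ∈ e, OnOddCycle F w}

lemma onOddCycle_iff_of_adj (h : F.Adj v w) : OnOddCycle F v ↔ OnOddCycle F w := by
  rw [OnOddCycle, OnOddCycle, ConnectedComponent.connectedComponentMk_eq_of_adj h]

lemma setOf_mk_mem_oddCycleEdges (hv : OnOddCycle F v) :
    {w | s(v, w) ∈ oddCycleEdges F} = F.neighborSet v := by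
  ext w
  simp only [oddCycleEdges, Set.mem_ofPred_eq, mem_edgeSet, Sym2.mem_iff, forall_eq_or_imp,
    forall_eq, mem_neighborSet]
  exact ⟨fun h => h.1, fun h => ⟨h, hv, (onOddCycle_iff_of_adj h).1 hv⟩⟩

lemma notMem_coveredVerts_oddCycleEdges (hv : ¬ OnOddCycle F v) :
    v ∉ coveredVerts (oddCycleEdges F) :=
  fun ⟨_, he, hve⟩ => hv (he.2 v hve)

variable [Finite V] (hG : IsCubic G) (hF : IsTwoFactor G F) (hMeven : IsMatchingIn Meven F)
  (hcov : coveredVerts Meven = {w | ¬ OnOddCycle F w})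
include hG hF hcov

lemma ncard_neighborSet_deleteEdges_oddCycleEdges_of_onOddCycle (hv : OnOddCycle F v) :
    (((G.deleteEdges Meven).deleteEdges (oddCycleEdges F)).neighborSet v).ncard = 1 := by
  have hvM : v ∉ coveredVerts Meven := by simpa [hcov]
  rw [neighborSet_deleteEdges, neighborSet_deleteEdges_of_notMem_coveredVerts hvM,
    setOf_mk_mem_oddCycleEdges hv, Set.ncard_sdiff (neighborSet_mono hF.1 v), hG v, hF.2 v]

include hMeven in
lemma ncard_neighborSet_deleteEdges_oddCycleEdges_of_not_onOddCycle (hv : ¬ OnOddCycle F v) :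
    (((G.deleteEdges Meven).deleteEdges (oddCycleEdges F)).neighborSet v).ncard = 2 := by
  rw [neighborSet_deleteEdges_of_notMem_coveredVerts (notMem_coveredVerts_oddCycleEdges hv),
    hMeven.ncard_neighborSet_deleteEdges hF.1 (by simpa [hcov]), hG v]

include hMeven in
lemma exists_isPath_between_odd_cycles {C : F.ConnectedComponent} (hC : Odd C.supp.ncard) :
    ∃ a ∈ C.supp, ∃ b ∉ C.supp, OnOddCycle F b ∧
      ∃ q : ((G.deleteEdges Meven).deleteEdges (oddCycleEdges F)).Walk a b, q.IsPath ∧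
        ∀ w ∈ q.support, w ≠ a → w ≠ b → ¬ OnOddCycle F w := by
  classical
  set K := (G.deleteEdges Meven).deleteEdges (oddCycleEdges F)
  have hdeg : ∀ w, Odd (K.neighborSet w).ncard ↔ OnOddCycle F w := by
    intro w
    by_cases hw : OnOddCycle F w
    · rw [ncard_neighborSet_deleteEdges_oddCycleEdges_of_onOddCycle hG hF hcov hw]
      exact iff_of_true odd_one hw
    · rw [ncard_neighborSet_deleteEdges_oddCycleEdges_of_not_onOddCycle hG hF hMeven hcov hw]
      exact iff_of_false (by decide) hw
  have hCodd : ∀ w ∈ C.supp, OnOddCycle F w := fun w hw => by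
    rwa [OnOddCycle, (C.mem_supp_iff w).1 hw]
  obtain ⟨a, ha, b, hb, hbodd, ⟨q⟩⟩ :=
    K.exists_reachable_of_odd_ncard hC fun w hw => (hdeg w).2 (hCodd w hw)
  refine ⟨a, ha, b, hb, (hdeg b).1 hbodd, q.bypass, q.bypass_isPath, fun w hw hwa hwb hwodd => ?_⟩
  have := q.bypass_isPath.two_le_ncard_neighborSet hw hwa hwb
  rw [ncard_neighborSet_deleteEdges_oddCycleEdges_of_onOddCycle hG hF hcov hwodd] at this
  omega

end OddCycles

lemma exists_isMatchingIn_coveredVerts_eq_compl_pair [Finite V] {F : SimpleGraph V}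
    (hF : ∀ v, (F.neighborSet v).ncard = 2) {C₁ C₂ : F.ConnectedComponent} (hC : C₁ ≠ C₂)
    (hodd : {c : F.ConnectedComponent | Odd c.supp.ncard} = {C₁, C₂})
    {Meven : Set (Sym2 V)} (hMeven : IsMatchingIn Meven F)
    (hcov : coveredVerts Meven = {w | ¬ OnOddCycle F w})
    {u v : V} (hu : u ∈ C₁.supp) (hv : v ∈ C₂.supp) :
    ∃ M, IsMatchingIn M F ∧ coveredVerts M = {u, v}ᶜ ∧ M ⊆ Meven ∪ oddCycleEdges F := by
  have honodd : ∀ w, OnOddCycle F w ↔ w ∈ C₁.supp ∨ w ∈ C₂.supp := fun w => Set.ext_iff.1 hodd _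
  have hdisj := F.pairwise_disjoint_supp_connectedComponent hC
  obtain ⟨N₁, hN₁, hcov₁⟩ :=
    exists_isMatchingIn_coveredVerts_eq_supp_diff hF ((Set.ext_iff.1 hodd C₁).2 (.inl rfl)) hu
  obtain ⟨N₂, hN₂, hcov₂⟩ :=
    exists_isMatchingIn_coveredVerts_eq_supp_diff hF ((Set.ext_iff.1 hodd C₂).2 (.inr rfl)) hv
  have hsub₁ : coveredVerts N₁ ⊆ C₁.supp := hcov₁ ▸ Set.sdiff_subset
  have hsub₂ : coveredVerts N₂ ⊆ C₂.supp := hcov₂ ▸ Set.sdiff_subset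
  have hM₁ : IsMatchingIn (Meven ∪ N₁) F := by
    refine hMeven.union hN₁ (Set.disjoint_left.2 fun w hw hw₁ => ?_)
    rw [hcov] at hw
    exact hw ((honodd w).2 (.inl (hsub₁ hw₁)))
  refine ⟨Meven ∪ N₁ ∪ N₂, hM₁.union hN₂ (Set.disjoint_left.2 fun w hw hw₂ => ?_), ?_, ?_⟩
  · rw [coveredVerts_union, hcov] at hw
    rcases hw with hw | hw₁
    · exact hw ((honodd w).2 (.inr (hsub₂ hw₂)))
    · exact Set.disjoint_left.1 hdisj (hsub₁ hw₁) (hsub₂ hw₂)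
  · ext w
    rw [coveredVerts_union, coveredVerts_union, hcov, hcov₁, hcov₂]
    simp only [Set.mem_union, Set.mem_ofPred_eq, Set.mem_compl_iff, Set.mem_insert_iff,
      Set.mem_singleton_iff, honodd]
    have := Set.disjoint_left.1 hdisj
    grind
  · rintro e ((he | he) | he)
    · exact .inl he
    · exact .inr ⟨hN₁.1 he, fun w hw => (honodd w).2 (.inl (hsub₁ ⟨e, he, hw⟩))⟩
    · exact .inr ⟨hN₂.1 he, fun w hw => (honodd w).2 (.inr (hsub₂ ⟨e, he, hw⟩))⟩

open SimpleGraph.Walk in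
lemma exists_isSimpleFMatching_deleteEdges [Finite V] {G F K : SimpleGraph V}
    {M : Set (Sym2 V)} {u a b v : V} (hG : IsCubic G) (hFG : F ≤ G) (hM : IsMatchingIn M F)
    (hcovM : coveredVerts M = {u, v}ᶜ) (hKM : K ≤ G.deleteEdges M)
    (hK : ∀ e ∈ K.edgeSet, e ∉ oddCycleEdges F) (hua : F.Adj u a) (hbv : F.Adj b v)
    (q : K.Walk a b) (hq : q.IsPath) (huq : u ∉ q.support) (hvq : v ∉ q.support) (huv : u ≠ v) :
    ∃ Ps, IsSimpleFMatching (G.deleteEdges M) F Ps := by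
  have huM : u ∉ coveredVerts M := by simp [hcovM]
  have hvM : v ∉ coveredVerts M := by simp [hcovM]
  have htwo : ∀ w, w ≠ u → w ≠ v → IsTwoVertex (G.deleteEdges M) w := fun w hwu hwv =>
    hM.isTwoVertex_deleteEdges hFG hG (by simp [hcovM, hwu, hwv])
  set W : (G.deleteEdges M).Walk u v :=
    .cons (adj_deleteEdges_of_notMem_coveredVerts huM (hFG hua))
      ((q.mapLe hKM).concat (adj_deleteEdges_of_notMem_coveredVerts hvM (hFG hbv.symm)).symm)
  have hW : W.IsPath := by
    rw [cons_isPath_iff, concat_isPath_iff, support_concat, support_mapLe_eq_support]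
    simpa [hq.mapLe hKM, hvq, huq] using huv
  have hWedges : ∀ e ∈ W.edges, e = s(u, a) ∨ e ∈ q.edges ∨ e = s(b, v) := by
    simp [W, edges_concat]
  have hqe : ∀ e ∈ q.edges, u ∉ e ∧ v ∉ e := fun e he =>
    ⟨fun h => huq (q.mem_support_of_mem_edges he h), fun h => hvq (q.mem_support_of_mem_edges he h)⟩
  let P : FPathIn (G.deleteEdges M) F :=
    { a := u, b := v, walk := W, isPath := hW, len_pos := by simp [W]
      ends_three := ⟨isThreeVertex_deleteEdges_of_notMem_coveredVerts hG huM,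
        isThreeVertex_deleteEdges_of_notMem_coveredVerts hG hvM⟩
      interior_two := fun w _ hwu hwv => htwo w hwu hwv
      end_edges := fun e he huve => by
        rcases hWedges e he with rfl | he | rfl
        · exact hua
        · exact absurd huve (by simpa using hqe e he)
        · exact hbv }
  refine ⟨{P}, ⟨fun P₁ h₁ P₂ h₂ hne => absurd (h₁.trans h₂.symm) hne, fun w hw => ?_⟩, ?_⟩
  · refine ⟨P, rfl, ?_⟩
    by_cases hwu : w = u
    · exact hwu ▸ W.start_mem_support
    by_cases hwv : w = v
    · exact hwv ▸ W.end_mem_support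
    exact absurd (htwo w hwu hwv) (by rw [IsTwoVertex, hw]; decide)
  · rintro _ rfl e he hodd
    rcases hWedges e he with rfl | he | rfl
    · exact .inl (Sym2.mem_mk_left u a)
    · exact absurd hodd (hK e (q.edges_subset_edgeSet he))
    · exact .inr (Sym2.mem_mk_right b v)

theorem statement5_general {V : Type*} [Fintype V] (G F : SimpleGraph V)
    (hG : IsSnark G)
    (hF : IsTwoFactor G F) (hFodd : oddCompCount F = 2) :
    ∃ M : Set (Sym2 V), IsMaximumMatchingIn M F ∧
      ∃ Ps : Set (FPathIn (G.deleteEdges M) F),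
        IsSimpleFMatching (G.deleteEdges M) F Ps := by
  have hcubic : IsCubic G := hG.2.2.1
  obtain ⟨C₁, C₂, hC, hodd⟩ := Set.ncard_eq_two.1 hFodd
  have honodd : ∀ w, OnOddCycle F w ↔ w ∈ C₁.supp ∨ w ∈ C₂.supp := fun w => Set.ext_iff.1 hodd _
  have hdisj := Set.disjoint_left.1 (F.pairwise_disjoint_supp_connectedComponent hC)
  obtain ⟨Meven, hMeven, hcov⟩ := exists_isMatchingIn_coveredVerts_eq_not_onOddCycle hF.2
  obtain ⟨a, ha, b, hb, hbodd, q, hq, hqint⟩ := exists_isPath_between_odd_cycles hcubic hF hMeven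
    hcov ((Set.ext_iff.1 hodd C₁).2 (.inl rfl))
  obtain ⟨u, hau⟩ := Set.nonempty_of_ncard_ne_zero (s := F.neighborSet a) (by simp [hF.2 a])
  obtain ⟨v, hbv⟩ := Set.nonempty_of_ncard_ne_zero (s := F.neighborSet b) (by simp [hF.2 b])
  have hu : u ∈ C₁.supp := (C₁.mem_supp_congr_adj hau).1 ha
  have hv : v ∈ C₂.supp := (C₂.mem_supp_congr_adj hbv).1 (((honodd b).1 hbodd).resolve_left hb)
  obtain ⟨M, hM, hcovM, hMsub⟩ :=
    exists_isMatchingIn_coveredVerts_eq_compl_pair hF.2 hC hodd hMeven hcov hu hv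
  refine ⟨M, hM.isMaximumMatchingIn ?_, ?_⟩
  · rw [hcovM, compl_compl, hFodd]
    exact (Set.ncard_insert_le _ _).trans (by simp)
  have huq : u ∉ q.support := fun h =>
    hqint u h (F.ne_of_adj hau).symm (fun hub => hb (hub ▸ hu)) ((honodd u).2 (.inl hu))
  have hvq : v ∉ q.support := fun h =>
    hqint v h (fun hva => hdisj ha (hva ▸ hv)) (F.ne_of_adj hbv).symm ((honodd v).2 (.inr hv))
  have hKM : (G.deleteEdges Meven).deleteEdges (oddCycleEdges F) ≤ G.deleteEdges M := by
    rw [deleteEdges_deleteEdges]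
    exact deleteEdges_anti hMsub
  exact exists_isSimpleFMatching_deleteEdges hcubic hF.1 hM hcovM hKM
    (fun e he => ((edgeSet_deleteEdges _).subset he).2) hau.symm hbv q hq huq hvq
    (fun huv => hdisj hu (huv ▸ hv))

theorem statement5 {V : Type*} [Fintype V] (G F : SimpleGraph V)
    (hG : IsSnark G) (hodd : oddness G = 2)
    (hF : IsTwoFactor G F) (hFodd : oddCompCount F = 2) :
    ∃ M : Set (Sym2 V), IsMaximumMatchingIn M F ∧
      ∃ Ps : Set (FPathIn (G.deleteEdges M) F),
        IsSimpleFMatching (G.deleteEdges M) F Ps :=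
  statement5_general G F hG hF hFodd
end
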